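/- Let G be a group and H a normal subgroup with G/H cyclic of prime order p, generated by the image of g ∈ G. Let ρ be an irreducible representation of H satisfying Schur's lemma with ρ^g ≇ ρ. Then Ind^G_H ρ is irreducible. -/

import Mathlib

noncomputable section

variable {G : Type*} [Group G]

/-- A submodule invariant under a representation. -/
def RepInvariant {V : Type*} [AddCommGroup V] [Module ℂ V]
    (π : Representation ℂ G V) (p : Submodule ℂ V) : Prop :=
  ∀ g : G, ∀ v ∈ p, π g v ∈ p

/-- An irreducible (simple) representation. -/
def RepIrreducible {V : Type*} [AddCommGroup V] [Module ℂ V]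
    (π : Representation ℂ G V) : Prop :=
  Nontrivial V ∧ ∀ p : Submodule ℂ V, RepInvariant π p → p = ⊥ ∨ p = ⊤

/-- Isomorphism of representations. -/
def RepIso {V W : Type*} [AddCommGroup V] [Module ℂ V] [AddCommGroup W] [Module ℂ W]
    (π : Representation ℂ G V) (σ : Representation ℂ G W) : Prop :=
  ∃ e : V ≃ₗ[ℂ] W, ∀ g v, e (π g v) = σ g (e v)

/-- `σ` occurs as a subrepresentation of `π`. -/
def RepContains {V W : Type*} [AddCommGroup V] [Module ℂ V] [AddCommGroup W] [Module ℂ W]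
    (π : Representation ℂ G V) (σ : Representation ℂ G W) : Prop :=
  ∃ j : W →ₗ[ℂ] V, Function.Injective j ∧ ∀ g w, j (σ g w) = π g (j w)

/-- Restriction of a representation to a subgroup. -/
def RepRes {V : Type*} [AddCommGroup V] [Module ℂ V] (H : Subgroup G)
    (π : Representation ℂ G V) : Representation ℂ ↥H V :=
  π.comp H.subtype

/-- The conjugation automorphism `h ↦ g h g⁻¹` of a normal subgroup. -/
def conjHom (H : Subgroup G) [hH : H.Normal] (g : G) : ↥H →* ↥H where
  toFun h := ⟨g * (h : G) * g⁻¹, hH.conj_mem _ h.2 g⟩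
  map_one' := by ext; simp
  map_mul' a b := by ext; simp

/-- The conjugate representation `ρ^g : h ↦ ρ(g h g⁻¹)`. -/
def RepConj {W : Type*} [AddCommGroup W] [Module ℂ W] {H : Subgroup G} [H.Normal]
    (ρ : Representation ℂ ↥H W) (g : G) : Representation ℂ ↥H W :=
  ρ.comp (conjHom H g)

/-- The subrepresentation on an invariant submodule. -/
def RepSub {V : Type*} [AddCommGroup V] [Module ℂ V] (π : Representation ℂ G V)
    (p : Submodule ℂ V) (hp : RepInvariant π p) : Representation ℂ G ↥p where
  toFun g := (π g).restrict (hp g)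
  map_one' := by ext v; simp [LinearMap.restrict_apply]
  map_mul' a b := by ext v; simp [LinearMap.restrict_apply]

/-- `π` is a (finite) direct sum of irreducible subrepresentations. -/
def RepFiniteSemisimple {V : Type*} [AddCommGroup V] [Module ℂ V]
    (π : Representation ℂ G V) : Prop :=
  ∃ (n : ℕ) (p : Fin n → Submodule ℂ V) (hp : ∀ i, RepInvariant π (p i)),
    (∀ i, RepIrreducible (RepSub π (p i) (hp i))) ∧ DirectSum.IsInternal p

/-- Schur's lemma holds for `ρ`: every self-intertwiner is a scalar. -/
def RepSchur {H : Type*} [Group H] {W : Type*} [AddCommGroup W] [Module ℂ W]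
    (ρ : Representation ℂ H W) : Prop :=
  ∀ f : W →ₗ[ℂ] W, (∀ h w, f (ρ h w) = ρ h (f w)) → ∃ c : ℂ, f = c • LinearMap.id

/-- The space of the induced representation `Ind_H^G ρ`. -/
def IndSpace {W : Type*} [AddCommGroup W] [Module ℂ W] (H : Subgroup G)
    (ρ : Representation ℂ ↥H W) : Submodule ℂ (G → W) where
  carrier := {f | ∀ (g : G) (h : ↥H), f (g * h) = ρ h⁻¹ (f g)}
  add_mem' := by intro a b ha hb g h; simp [ha g h, hb g h]
  zero_mem' := by intro g h; simp
  smul_mem' := by intro c f hf g h; simp [hf g h]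

/-- The induced representation `Ind_H^G ρ`, with `(x • f)(g) = f (x⁻¹ g)`. -/
def IndRep {W : Type*} [AddCommGroup W] [Module ℂ W] (H : Subgroup G)
    (ρ : Representation ℂ ↥H W) : Representation ℂ G ↥(IndSpace H ρ) where
  toFun x :=
    { toFun := fun f => ⟨fun g => (f : G → W) (x⁻¹ * g), by
        intro g h
        have := f.2 (x⁻¹ * g) h
        simpa [mul_assoc] using this⟩
      map_add' := by intro a b; ext g; simp
      map_smul' := by intro c a; ext g; simp }
  map_one' := by ext f g; simp
  map_mul' a b := by ext f g; simp [mul_assoc]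

/-- The twist `π ⊗ ω` of a representation by a character. -/
def TwistRep {V : Type*} [AddCommGroup V] [Module ℂ V] (π : Representation ℂ G V)
    (ω : G →* ℂˣ) : Representation ℂ G V where
  toFun g := (ω g : ℂ) • π g
  map_one' := by simp
  map_mul' a b := by
    ext v
    simp [Module.End.mul_apply, map_mul, smul_smul, mul_comm]

/-- The direct sum `⊕_i σ_i` of a (finite) family of representations on the same space. -/
def PiRep {ι : Type*} {W : Type*} [AddCommGroup W] [Module ℂ W]
    (σ : ι → Representation ℂ G W) : Representation ℂ G (ι → W) where
  toFun g := LinearMap.pi fun i => (σ i g).comp (LinearMap.proj i)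
  map_one' := by ext v i; simp
  map_mul' a b := by ext v i; simp

end


/-!
Restricted to `H`, `Ind ρ` embeds, by evaluation at coset representatives `x`, into the sum of
the conjugates `ρ^{x⁻¹}` over `G ⧸ H`, one summand per coset. As `[G : H]` is prime and
`ρ^g ≇ ρ`, the inertia group `{x | ρ^x ≅ ρ}` is exactly `H`, so the summands are pairwise
non-isomorphic irreducibles. A nonzero `G`-invariant subspace `U` therefore contains a nonzero
vector supported on a single coset, hence (by irreducibility) the whole summand of that coset,
and translating by `G`, every summand.
-/
section Intertwiners
variable {K : Type*} [Group K] {V W X : Type*} [AddCommGroup V] [Module ℂ V]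
  [AddCommGroup W] [Module ℂ W] [AddCommGroup X] [Module ℂ X]
  {π : Representation ℂ K V} {σ : Representation ℂ K W} {τ : Representation ℂ K X}

theorem RepIso.refl (π : Representation ℂ K V) : RepIso π π :=
  ⟨LinearEquiv.refl ℂ V, fun _ _ => rfl⟩

theorem RepIso.symm (h : RepIso π σ) : RepIso σ π := by
  obtain ⟨e, he⟩ := h
  exact ⟨e.symm, fun k w => e.injective (by simp [he])⟩

theorem RepIso.trans (h : RepIso π σ) (h' : RepIso σ τ) : RepIso π τ := by
  obtain ⟨e, he⟩ := h
  obtain ⟨e', he'⟩ := h'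
  exact ⟨e.trans e', fun k v => by simp [he, he']⟩

theorem RepInvariant.inf {U U' : Submodule ℂ V} (hU : RepInvariant π U) (hU' : RepInvariant π U') :
    RepInvariant π (U ⊓ U') := fun k v hv => ⟨hU k v hv.1, hU' k v hv.2⟩

theorem RepIso.of_bijective {f : V →ₗ[ℂ] W} (hf : Function.Bijective f)
    (hfπ : ∀ k v, f (π k v) = σ k (f v)) : RepIso π σ :=
  ⟨LinearEquiv.ofBijective f hf, hfπ⟩

theorem RepIrreducible.map_eq_top (hσ : RepIrreducible σ) {f : V →ₗ[ℂ] W}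
    (hfπ : ∀ k v, f (π k v) = σ k (f v)) {U : Submodule ℂ V} (hU : RepInvariant π U)
    {u : V} (hu : u ∈ U) (hfu : f u ≠ 0) : U.map f = ⊤ := by
  refine (hσ.2 _ ?_).resolve_left fun hbot => hfu ?_
  · rintro k _ ⟨v, hv, rfl⟩
    exact ⟨π k v, hU k v hv, hfπ k v⟩
  · simpa [hbot] using Submodule.mem_map_of_mem (f := f) hu

theorem RepIrreducible.repIso_repSub (hσ : RepIrreducible σ) {f : V →ₗ[ℂ] W}
    (hfπ : ∀ k v, f (π k v) = σ k (f v)) {U : Submodule ℂ V} (hU : RepInvariant π U)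
    (hinj : ∀ v ∈ U, f v = 0 → v = 0) {u : V} (hu : u ∈ U) (hfu : f u ≠ 0) :
    RepIso (RepSub π U hU) σ := by
  refine RepIso.of_bijective (f := f.comp U.subtype) ⟨?_, fun w => ?_⟩ fun k v => hfπ k v
  · refine (injective_iff_map_eq_zero _).2 fun v hv => Subtype.ext (hinj v v.2 hv)
  · obtain ⟨v, hv, rfl⟩ : w ∈ U.map f := hσ.map_eq_top hfπ hU hu hfu ▸ Submodule.mem_top
    exact ⟨⟨v, hv⟩, rfl⟩

end Intertwiners

section Conjugation
variable {G : Type*} [Group G] {H : Subgroup G} [H.Normal]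
  {W W' : Type*} [AddCommGroup W] [Module ℂ W] [AddCommGroup W'] [Module ℂ W']
  {ρ : Representation ℂ ↥H W}

variable (ρ) in
theorem RepConj_one : RepConj ρ 1 = ρ := by
  ext h : 1
  simp [RepConj, conjHom]

variable (ρ) in
theorem RepConj_mul (a b : G) : RepConj (RepConj ρ a) b = RepConj ρ (a * b) := by
  ext h : 1
  simp [RepConj, conjHom, mul_assoc]

theorem RepIso.repConj {ρ₁ : Representation ℂ ↥H W} {σ : Representation ℂ ↥H W'}
    (h : RepIso ρ₁ σ) (x : G) : RepIso (RepConj ρ₁ x) (RepConj σ x) := by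
  obtain ⟨e, he⟩ := h
  exact ⟨e, fun h v => he _ v⟩

variable (ρ) in
theorem repIso_repConj_of_mem {a : G} (ha : a ∈ H) : RepIso (RepConj ρ a) ρ := by
  refine ⟨LinearEquiv.ofLinearMap (ρ ⟨a, ha⟩⁻¹) (ρ ⟨a, ha⟩) ?_ ?_, fun h w => ?_⟩
  · ext w; simp
  · ext w; simp
  · have hconj : conjHom H a h = ⟨a, ha⟩ * h * ⟨a, ha⟩⁻¹ := by ext; simp [conjHom]
    simp [RepConj, hconj, ← Module.End.mul_apply, ← map_mul, mul_assoc]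

theorem RepIrreducible.repConj (hρ : RepIrreducible ρ) (x : G) :
    RepIrreducible (RepConj ρ x) := by
  refine ⟨hρ.1, fun U hU => hρ.2 U fun h v hv => ?_⟩
  have hh : conjHom H x (conjHom H x⁻¹ h) = h := by ext; simp [conjHom, mul_assoc]
  simpa [RepConj, hh] using hU (conjHom H x⁻¹ h) v hv

variable (ρ) in
def inertia : Subgroup G where
  carrier := {x | RepIso (RepConj ρ x) ρ}
  one_mem' := by simpa [RepConj_one] using RepIso.refl ρ
  mul_mem' {a b} ha hb := by
    simpa [RepConj_mul] using (RepIso.repConj ha b).trans hb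
  inv_mem' {a} ha := by
    simpa [RepConj_mul, RepConj_one] using (RepIso.repConj ha a⁻¹).symm

theorem mem_inertia {x : G} : x ∈ inertia ρ ↔ RepIso (RepConj ρ x) ρ := Iff.rfl

variable (ρ) in
theorem le_inertia : H ≤ inertia ρ := fun _ ha => repIso_repConj_of_mem ρ ha

variable (ρ) in
theorem inertia_le_of_card_quotient_prime {p : ℕ} (hp : p.Prime) (hcard : Nat.card (G ⧸ H) = p)
    {g : G} (hg : ¬ RepIso (RepConj ρ g) ρ) : inertia ρ ≤ H := by
  have hHT := le_inertia ρ
  have hindex : H.index = p := by rw [Subgroup.index_eq_card, hcard]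
  have hT : (inertia ρ).index = p := by
    refine ((Nat.dvd_prime hp).1 (hindex ▸ Subgroup.index_dvd_of_le hHT)).resolve_left
      fun h1 => hg (mem_inertia.1 ?_)
    rw [Subgroup.index_eq_one.1 h1]
    trivial
  rw [← Subgroup.relIndex_eq_one]
  simpa [hT, hindex, hp.ne_zero] using Subgroup.relIndex_mul_index hHT

end Conjugation

section MultiplicityFree
variable {K ι : Type*} [Group K] {V W : Type*} [AddCommGroup V] [Module ℂ V]
  [AddCommGroup W] [Module ℂ W]

structure MultiplicityFreeEmbedding (π : Representation ℂ K V)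
    (σ : ι → Representation ℂ K W) (ev : ι → V →ₗ[ℂ] W) : Prop where
  intertwines : ∀ i k v, ev i (π k v) = σ i k (ev i v)
  injective : ∀ v, (∀ i, ev i v = 0) → v = 0
  irreducible : ∀ i, RepIrreducible (σ i)
  pairwise_not_repIso : Pairwise fun i j => ¬ RepIso (σ i) (σ j)

def supportedOn (ev : ι → V →ₗ[ℂ] W) (s : Set ι) : Submodule ℂ V :=
  ⨅ (j) (_ : j ∉ s), LinearMap.ker (ev j)

theorem mem_supportedOn {ev : ι → V →ₗ[ℂ] W} {s : Set ι} {v : V} :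
    v ∈ supportedOn ev s ↔ Function.support (ev · v) ⊆ s := by
  simp only [supportedOn, Submodule.mem_iInf, LinearMap.mem_ker, Function.support_subset_iff']

namespace MultiplicityFreeEmbedding
variable {π : Representation ℂ K V} {σ : ι → Representation ℂ K W}
  {ev : ι → V →ₗ[ℂ] W} {U : Submodule ℂ V}

theorem repInvariant_supportedOn (hπ : MultiplicityFreeEmbedding π σ ev) (s : Set ι) :
    RepInvariant π (supportedOn ev s) := fun k v hv => by
  simp only [mem_supportedOn, Function.support_subset_iff'] at hv ⊢
  intro j hj
  rw [hπ.intertwines, hv j hj, map_zero]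

/-- A nonzero vector of `U` of minimal support is supported at a single index: otherwise two
of its components would identify two of the `σᵢ` with the same subrepresentation of `U`. -/
theorem exists_ne_zero_mem_supportedOn_singleton [Finite ι]
    (hπ : MultiplicityFreeEmbedding π σ ev) (hU : RepInvariant π U) (hU0 : U ≠ ⊥) :
    ∃ i, ∃ u ∈ U ⊓ supportedOn ev {i}, u ≠ 0 := by
  obtain ⟨v, ⟨hvU, hv0⟩, hmin⟩ :=
    (measure fun v => (Function.support (ev · v)).ncard).wf.has_min {v | v ∈ U ∧ v ≠ 0}
      (Submodule.exists_mem_ne_zero_of_ne_bot hU0)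
  obtain ⟨i, hi⟩ : ∃ i, ev i v ≠ 0 := by
    by_contra! h
    exact hv0 (hπ.injective v h)
  refine ⟨i, v, ⟨hvU, mem_supportedOn.2 fun j hj => ?_⟩, hv0⟩
  by_contra hji
  set M := U ⊓ supportedOn ev (Function.support (ev · v))
  have hM : RepInvariant π M := hU.inf (hπ.repInvariant_supportedOn _)
  have hinj : ∀ t ∈ Function.support (ev · v), ∀ u ∈ M, ev t u = 0 → u = 0 := by
    intro t ht u hu hut
    by_contra hu0
    refine hmin u ⟨hu.1, hu0⟩ (Set.ncard_lt_ncard ?_ (Set.toFinite _))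
    exact (Set.ssubset_iff_of_subset (mem_supportedOn.1 hu.2)).2 ⟨t, ht, fun h => h hut⟩
  have hvM : v ∈ M := ⟨hvU, mem_supportedOn.2 subset_rfl⟩
  have hiso : ∀ t ∈ Function.support (ev · v), RepIso (RepSub π M hM) (σ t) := fun t ht =>
    (hπ.irreducible t).repIso_repSub (hπ.intertwines t) hM (hinj t ht) hvM ht
  exact hπ.pairwise_not_repIso (Ne.symm hji) ((hiso i hi).symm.trans (hiso j hj))

theorem eq_zero_of_mem_supportedOn_singleton (hπ : MultiplicityFreeEmbedding π σ ev) {i : ι}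
    {v : V} (hv : v ∈ supportedOn ev {i}) (hvi : ev i v = 0) : v = 0 :=
  hπ.injective v fun j => by
    by_contra hj
    obtain rfl : j = i := mem_supportedOn.1 hv hj
    exact hj hvi

theorem supportedOn_singleton_le (hπ : MultiplicityFreeEmbedding π σ ev) (hU : RepInvariant π U)
    {i : ι} {u : V} (hu : u ∈ U ⊓ supportedOn ev {i}) (hu0 : u ≠ 0) :
    supportedOn ev {i} ≤ U := by
  have hi : ev i u ≠ 0 := fun h => hu0 (hπ.eq_zero_of_mem_supportedOn_singleton hu.2 h)
  have hN := hU.inf (hπ.repInvariant_supportedOn {i})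
  intro c hc
  obtain ⟨v, hv, hvc⟩ : ev i c ∈ (U ⊓ supportedOn ev {i}).map (ev i) :=
    (hπ.irreducible i).map_eq_top (hπ.intertwines i) hN hu hi ▸ Submodule.mem_top
  have hcv : c - v = 0 :=
    hπ.eq_zero_of_mem_supportedOn_singleton (sub_mem hc hv.2) (by rw [map_sub, hvc, sub_self])
  exact sub_eq_zero.1 hcv ▸ hv.1

theorem iSup_supportedOn_singleton_eq_top [Finite ι] (hπ : MultiplicityFreeEmbedding π σ ev)
    (hsurj : ∀ i w, ∃ v ∈ supportedOn ev {i}, ev i v = w) :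
    ⨆ i, supportedOn ev {i} = ⊤ := by
  have := Fintype.ofFinite ι
  choose c hc hcev using hsurj
  refine eq_top_iff.2 fun v _ => ?_
  have hsum : v = ∑ i, c i (ev i v) := by
    refine sub_eq_zero.1 (hπ.injective _ fun j => ?_)
    rw [map_sub, map_sum, Finset.sum_eq_single j (fun i _ hij => ?_) (by simp), hcev, sub_self]
    by_contra hj
    exact hij (mem_supportedOn.1 (hc i _) hj).symm
  exact hsum ▸ Submodule.sum_mem_iSup fun i => hc i _

end MultiplicityFreeEmbedding

end MultiplicityFree

section Induced
variable {G : Type*} [Group G] {H : Subgroup G}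
  {W : Type*} [AddCommGroup W] [Module ℂ W] {ρ : Representation ℂ ↥H W}

theorem IndSpace.apply_eq (f : IndSpace H ρ) {a x : G} (h : a⁻¹ * x ∈ H) :
    (f : G → W) x = ρ ⟨a⁻¹ * x, h⟩⁻¹ ((f : G → W) a) := by
  simpa using f.2 a ⟨a⁻¹ * x, h⟩

theorem indRep_apply (y : G) (f : IndSpace H ρ) (x : G) :
    (IndRep H ρ y f : G → W) x = (f : G → W) (y⁻¹ * x) := rfl

variable (H ρ) in
def indEval (a : G) : IndSpace H ρ →ₗ[ℂ] W :=
  (LinearMap.proj a).comp (IndSpace H ρ).subtype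

theorem indEval_apply (a : G) (f : IndSpace H ρ) : indEval H ρ a f = (f : G → W) a := rfl

open scoped Classical in
variable (H ρ) in
noncomputable def indSingle (w : W) : IndSpace H ρ :=
  ⟨fun x => if hx : x ∈ H then ρ ⟨x, hx⟩⁻¹ w else 0, fun x h => by
    by_cases hx : x ∈ H
    · have hxh : (⟨x * h, mul_mem hx h.2⟩ : H) = ⟨x, hx⟩ * h := rfl
      simp [dif_pos hx, dif_pos (mul_mem hx h.2), hxh, map_mul]
    · have hxh : x * h ∉ H := fun hxh => hx (by simpa using mul_mem hxh (inv_mem h.2))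
      simp [dif_neg hx, dif_neg hxh]⟩

theorem indSingle_apply_one (w : W) : (indSingle H ρ w : G → W) 1 = w := by
  have h1 : (⟨1, one_mem H⟩ : H) = 1 := rfl
  simp [indSingle, h1]

theorem indSingle_apply_of_notMem (w : W) {x : G} (hx : x ∉ H) :
    (indSingle H ρ w : G → W) x = 0 :=
  dif_neg hx

variable (H ρ) in
noncomputable abbrev cosetEval (q : G ⧸ H) : IndSpace H ρ →ₗ[ℂ] W := indEval H ρ q.out

theorem mem_supportedOn_cosetEval {q : G ⧸ H} {f : IndSpace H ρ} :
    f ∈ supportedOn (cosetEval H ρ) {q} ↔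
      ∀ x : G, (x : G ⧸ H) ≠ q → (f : G → W) x = 0 := by
  rw [mem_supportedOn, Function.support_subset_iff']
  refine ⟨fun hf x hx => ?_, fun hf q' hq' => hf _ (by rwa [QuotientGroup.out_eq'])⟩
  rw [IndSpace.apply_eq f (QuotientGroup.eq.1 (QuotientGroup.out_eq' (x : G ⧸ H)))]
  simp [← indEval_apply, hf _ hx]

theorem indRep_mem_supportedOn_cosetEval {q : G ⧸ H} {f : IndSpace H ρ}
    (hf : f ∈ supportedOn (cosetEval H ρ) {q}) (x : G) :
    IndRep H ρ x f ∈ supportedOn (cosetEval H ρ) {x • q} := by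
  rw [mem_supportedOn_cosetEval] at hf ⊢
  intro y hy
  refine hf _ fun h => hy ?_
  rw [← h, MulAction.Quotient.smul_mk, smul_eq_mul, mul_inv_cancel_left]

theorem exists_mem_supportedOn_cosetEval (q : G ⧸ H) (w : W) :
    ∃ f ∈ supportedOn (cosetEval H ρ) {q}, cosetEval H ρ q f = w := by
  have hsingle : indSingle H ρ w ∈ supportedOn (cosetEval H ρ) {((1 : G) : G ⧸ H)} :=
    mem_supportedOn_cosetEval.2 fun x hx =>
      indSingle_apply_of_notMem w fun hxH => hx (QuotientGroup.eq.2 (by simpa using hxH)).symm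
  refine ⟨IndRep H ρ q.out (indSingle H ρ w), ?_, ?_⟩
  · have hq : q.out • ((1 : G) : G ⧸ H) = q := by
      rw [MulAction.Quotient.smul_mk, smul_eq_mul, mul_one, QuotientGroup.out_eq']
    simpa only [hq] using indRep_mem_supportedOn_cosetEval hsingle q.out
  · simp [indEval_apply, indRep_apply, indSingle_apply_one]

theorem supportedOn_cosetEval_le {U : Submodule ℂ (IndSpace H ρ)}
    (hU : RepInvariant (IndRep H ρ) U)
    {q : G ⧸ H} (hq : supportedOn (cosetEval H ρ) {q} ≤ U) (q' : G ⧸ H) :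
    supportedOn (cosetEval H ρ) {q'} ≤ U := by
  obtain ⟨x, rfl⟩ := MulAction.exists_smul_eq G q q'
  intro f hf
  have hf' := hU x _ (hq (by simpa using indRep_mem_supportedOn_cosetEval hf x⁻¹))
  rwa [Representation.self_inv_apply] at hf'

variable [H.Normal]

theorem indEval_indRep (a : G) (h : H) (f : IndSpace H ρ) :
    indEval H ρ a (IndRep H ρ h f) = RepConj ρ a⁻¹ h (indEval H ρ a f) := by
  have hmem : a⁻¹ * ((h : G)⁻¹ * a) ∈ H := by
    simpa [mul_assoc] using Subgroup.Normal.conj_mem ‹_› _ (inv_mem h.2) a⁻¹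
  rw [indEval_apply, indRep_apply, IndSpace.apply_eq f hmem, RepConj, MonoidHom.comp_apply]
  congr 2
  ext
  simp [conjHom, mul_assoc]

theorem multiplicityFreeEmbedding_indRep (hρ : RepIrreducible ρ) (hinert : inertia ρ ≤ H) :
    MultiplicityFreeEmbedding (RepRes H (IndRep H ρ)) (fun q : G ⧸ H => RepConj ρ q.out⁻¹)
      (cosetEval H ρ) where
  intertwines q h f := indEval_indRep _ h f
  injective f hf := by
    ext x
    rw [IndSpace.apply_eq f (QuotientGroup.eq.1 (QuotientGroup.out_eq' (x : G ⧸ H)))]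
    simp [← indEval_apply, hf]
  irreducible q := hρ.repConj _
  pairwise_not_repIso q q' hqq' hiso := hqq' <| by
    have hmem : q.out⁻¹ * q'.out ∈ inertia ρ := by
      rw [mem_inertia]
      simpa [RepConj_mul, RepConj_one] using hiso.repConj q'.out
    rw [← QuotientGroup.out_eq' q, ← QuotientGroup.out_eq' q']
    exact QuotientGroup.eq.2 (hinert hmem)

/-- Mackey's criterion for a normal subgroup of finite index. -/
theorem RepIrreducible.indRep [Finite (G ⧸ H)] (hρ : RepIrreducible ρ)
    (hinert : inertia ρ ≤ H) :
    RepIrreducible (IndRep H ρ) := by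
  have hπ := multiplicityFreeEmbedding_indRep hρ hinert
  refine ⟨?_, fun U hU => or_iff_not_imp_left.2 fun hU0 => ?_⟩
  · have := hρ.1
    exact Function.Surjective.nontrivial (f := cosetEval H ρ 1) fun w =>
      (exists_mem_supportedOn_cosetEval 1 w).imp fun _ => And.right
  · have hUH : RepInvariant (RepRes H (IndRep H ρ)) U := fun h => hU h
    obtain ⟨q, u, hu, hu0⟩ := hπ.exists_ne_zero_mem_supportedOn_singleton hUH hU0
    have hq := hπ.supportedOn_singleton_le hUH hu hu0
    rw [eq_top_iff, ← hπ.iSup_supportedOn_singleton_eq_top exists_mem_supportedOn_cosetEval,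
      iSup_le_iff]
    exact supportedOn_cosetEval_le hU hq

end Induced

theorem statement4_general {G : Type} [Group G] (H : Subgroup G) [H.Normal]
    (p : ℕ) (hp : p.Prime) (hcard : Nat.card (G ⧸ H) = p)
    (g : G)
    {W : Type} [AddCommGroup W] [Module ℂ W]
    (ρ : Representation ℂ ↥H W) (hρ : RepIrreducible ρ)
    (hconj : ¬ RepIso (RepConj ρ g) ρ) :
    RepIrreducible (IndRep H ρ) := by
  have : Finite (G ⧸ H) := Nat.finite_of_card_ne_zero (hcard ▸ hp.ne_zero)
  exact hρ.indRep (inertia_le_of_card_quotient_prime ρ hp hcard hconj)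

/-- If `G/H` is cyclic of prime order `p` generated by the image of `g`, and `ρ` is an
irreducible representation of `H` satisfying Schur's lemma with `ρ^g ≇ ρ`, then the
induced representation `Ind_H^G ρ` is irreducible. -/
theorem statement4 {G : Type} [Group G] (H : Subgroup G) [H.Normal]
    (p : ℕ) (hp : p.Prime) (hcard : Nat.card (G ⧸ H) = p)
    (g : G) (hgen : ∀ x : G ⧸ H, x ∈ Subgroup.zpowers ((g : G ⧸ H)))
    {W : Type} [AddCommGroup W] [Module ℂ W]
    (ρ : Representation ℂ ↥H W) (hρ : RepIrreducible ρ) (hschur : RepSchur ρ)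
    (hconj : ¬ RepIso (RepConj ρ g) ρ) :
    RepIrreducible (IndRep H ρ) :=
  statement4_general H p hp hcard g ρ hρ hconj
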